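/- Coverage centrality is submodular, and hence for the hypercube Q_r with n = 2^r vertices, max_{|S|≤k} C(S) ≤ k · n^{log₂ 3} = o(n²) for constant k. -/

import Mathlib

/-- A walk is a shortest path: it is a path whose length equals the graph distance. -/
def IsShortestPath {V : Type*} (G : SimpleGraph V) {s t : V} (p : G.Walk s t) : Prop :=
  p.IsPath ∧ p.length = G.dist s t

/-- The internal vertices of a walk (its support with the two endpoints removed). -/
def internals {V : Type*} {G : SimpleGraph V} {s t : V} (p : G.Walk s t) : List V :=
  p.support.tail.dropLast

open Classical in
/-- Coverage centrality `C(S) = ∑_{s,t} P_{s,t}(S)`, where `P_{s,t}(S) = 1` iff some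
shortest `s`-`t` path has an internal vertex in `S`. -/
noncomputable def coverage {V : Type*} [Fintype V] (G : SimpleGraph V) (S : Finset V) : ℝ :=
  ∑ s : V, ∑ t : V,
    if ∃ p : G.Walk s t, IsShortestPath G p ∧ ∃ v ∈ internals p, v ∈ S then (1 : ℝ) else 0

/-- The hypercube graph `Q_r` on `Fin r → Bool`. -/
def cube (r : ℕ) : SimpleGraph (Fin r → Bool) where
  Adj a b := hammingDist a b = 1
  symm := by constructor; intro a b h; rwa [hammingDist_comm]
  loopless := by constructor; intro a h; simp [hammingDist_self] at h

open Classical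

private lemma ite_nonneg' {p : Prop} [Decidable p] : (0:ℝ) ≤ if p then 1 else 0 := by
  split <;> norm_num

/-- Any walk in the cube is at least as long as the Hamming distance of its endpoints. -/
lemma cube_walk_length {r : ℕ} : ∀ {a b : Fin r → Bool} (p : (cube r).Walk a b),
    hammingDist a b ≤ p.length := by
  intro a b p
  induction p with
  | nil => simp [hammingDist_self]
  | @cons u v w h p ih =>
    have h1 : hammingDist u v = 1 := h
    calc hammingDist u w ≤ hammingDist u v + hammingDist v w := hammingDist_triangle u v w
      _ ≤ 1 + p.length := by omega
      _ = (SimpleGraph.Walk.cons h p).length := by simp [SimpleGraph.Walk.length_cons]; omega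

/-- There is a walk realizing the Hamming distance. -/
lemma cube_exists_walk {r : ℕ} : ∀ (n : ℕ) (a b : Fin r → Bool), hammingDist a b = n →
    ∃ p : (cube r).Walk a b, p.length = n := by
  intro n
  induction n with
  | zero =>
    intro a b h
    rw [hammingDist_eq_zero] at h
    subst h
    exact ⟨.nil, rfl⟩
  | succ n ih =>
    intro a b h
    have hne : a ≠ b := by
      intro e; subst e; simp [hammingDist_self] at h
    obtain ⟨i, hi⟩ : ∃ i, a i ≠ b i := Function.ne_iff.mp hne
    set a' := Function.update a i (b i) with ha'
    have hadj : (cube r).Adj a a' := by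
      show hammingDist a a' = 1
      have : ({j | a j ≠ a' j} : Finset (Fin r)) = {i} := by
        ext j
        by_cases hj : j = i <;> simp [ha', Function.update_apply, hj, hi]
      show ({j | a j ≠ a' j} : Finset (Fin r)).card = 1
      rw [this]; simp
    have hd : hammingDist a' b = n := by
      have hset : ({j | a' j ≠ b j} : Finset (Fin r)) = ({j | a j ≠ b j} : Finset (Fin r)).erase i := by
        ext j
        by_cases hj : j = i <;> simp [ha', Function.update_apply, hj]
      have hmem : i ∈ ({j | a j ≠ b j} : Finset (Fin r)) := by simp [hi]
      have : ({j | a' j ≠ b j} : Finset (Fin r)).card = ({j | a j ≠ b j} : Finset (Fin r)).card - 1 := by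
        rw [hset, Finset.card_erase_of_mem hmem]
      have hab : ({j | a j ≠ b j} : Finset (Fin r)).card = n + 1 := h
      show ({j | a' j ≠ b j} : Finset (Fin r)).card = n
      omega
    obtain ⟨p, hp⟩ := ih a' b hd
    exact ⟨.cons hadj p, by simp [SimpleGraph.Walk.length_cons, hp]⟩

lemma cube_dist {r : ℕ} (a b : Fin r → Bool) : (cube r).dist a b = hammingDist a b := by
  obtain ⟨p, hp⟩ := cube_exists_walk (hammingDist a b) a b rfl
  refine le_antisymm (hp ▸ SimpleGraph.dist_le p) ?_
  have hr : (cube r).Reachable a b := ⟨p⟩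
  obtain ⟨q, hq⟩ := hr.exists_walk_length_eq_dist
  exact hq ▸ cube_walk_length q

lemma geodesic_coord {r : ℕ} {s t v : Fin r → Bool}
    (h : hammingDist s v + hammingDist v t = hammingDist s t) :
    ∀ i, s i = t i → v i = s i := by
  by_contra hc
  push_neg at hc
  obtain ⟨i, hst, hvs⟩ := hc
  set A : Finset (Fin r) := {j | s j ≠ v j} with hA
  set B : Finset (Fin r) := {j | v j ≠ t j} with hB
  set C : Finset (Fin r) := {j | s j ≠ t j} with hC
  have hsub : C ⊆ A ∪ B := by
    intro j hj
    simp only [hA, hB, hC, Finset.mem_union, Finset.mem_filter, Finset.mem_univ, true_and] at hj ⊢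
    by_contra hcon
    push_neg at hcon
    exact hj (hcon.1.trans hcon.2)
  have hiA : i ∈ A := by simp [hA]; exact fun e => hvs e.symm
  have hiB : i ∈ B := by simp [hB]; rw [← hst]; exact hvs
  have h1 : C.card ≤ (A ∪ B).card := Finset.card_le_card hsub
  have h2 : (A ∪ B).card + (A ∩ B).card = A.card + B.card := Finset.card_union_add_card_inter A B
  have h3 : 0 < (A ∩ B).card := Finset.card_pos.mpr ⟨i, Finset.mem_inter.mpr ⟨hiA, hiB⟩⟩
  have hAe : hammingDist s v = A.card := rfl
  have hBe : hammingDist v t = B.card := rfl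
  have hCe : hammingDist s t = C.card := rfl
  omega

lemma shortest_support {r : ℕ} {s t : Fin r → Bool} {p : (cube r).Walk s t}
    (hp : IsShortestPath (cube r) p) {v : Fin r → Bool} (hv : v ∈ p.support) :
    hammingDist s v + hammingDist v t = hammingDist s t := by
  have hsplit := p.take_spec hv
  have hlen : (p.takeUntil v hv).length + (p.dropUntil v hv).length = p.length := by
    conv_rhs => rw [← hsplit]
    rw [SimpleGraph.Walk.length_append]
  have h1 := cube_walk_length (p.takeUntil v hv)
  have h2 := cube_walk_length (p.dropUntil v hv)
  have h3 : p.length = hammingDist s t := by rw [hp.2, cube_dist]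
  have h4 := hammingDist_triangle s v t
  omega

lemma count_le {r : ℕ} (v : Fin r → Bool) :
    (Finset.univ.filter
      (fun st : (Fin r → Bool) × (Fin r → Bool) => ∀ i, st.1 i = st.2 i → v i = st.1 i)).card
      ≤ 3 ^ r := by
  have key : ∀ (w x1 x2 y1 y2 : Bool),
      (x1 = x2 → w = x1) → (y1 = y2 → w = y1) →
      ((if x1 = w then if x2 = w then (0 : Fin 3) else 1 else 2) =
       (if y1 = w then if y2 = w then 0 else 1 else 2)) → x1 = y1 ∧ x2 = y2 := by decide
  have hinj : Set.InjOn
      (fun st : (Fin r → Bool) × (Fin r → Bool) =>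
        fun i => if st.1 i = v i then (if st.2 i = v i then (0 : Fin 3) else 1) else 2)
      ↑(Finset.univ.filter
        (fun st : (Fin r → Bool) × (Fin r → Bool) => ∀ i, st.1 i = st.2 i → v i = st.1 i)) := by
    intro a ha b hb hg
    simp only [Finset.coe_filter, Set.mem_setOf_eq] at ha hb
    have hcomp : ∀ i, a.1 i = b.1 i ∧ a.2 i = b.2 i := by
      intro i
      exact key (v i) (a.1 i) (a.2 i) (b.1 i) (b.2 i) (ha.2 i) (hb.2 i) (congrFun hg i)
    exact Prod.ext (funext fun i => (hcomp i).1) (funext fun i => (hcomp i).2)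
  calc _ ≤ (Finset.univ : Finset (Fin r → Fin 3)).card :=
        Finset.card_le_card_of_injOn _ (fun _ _ => Finset.mem_univ _) hinj
    _ = 3 ^ r := by simp

lemma sum_ind_le {r : ℕ} (v : Fin r → Bool) :
    ∑ s : Fin r → Bool, ∑ t : Fin r → Bool,
      (if ∃ p : (cube r).Walk s t, IsShortestPath (cube r) p ∧ v ∈ internals p
       then (1 : ℝ) else 0) ≤ 3 ^ r := by
  have hle : ∀ s t : Fin r → Bool,
      (if ∃ p : (cube r).Walk s t, IsShortestPath (cube r) p ∧ v ∈ internals p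
       then (1 : ℝ) else 0) ≤
      (if ∀ i, s i = t i → v i = s i then (1 : ℝ) else 0) := by
    intro s t
    by_cases h : ∃ p : (cube r).Walk s t, IsShortestPath (cube r) p ∧ v ∈ internals p
    · obtain ⟨p, hp, hvint⟩ := h
      have hsup : v ∈ p.support := List.tail_subset _ (List.dropLast_subset _ hvint)
      have hco := geodesic_coord (shortest_support hp hsup)
      simp only [if_pos hco]
      split <;> norm_num
    · simp only [if_neg h]
      exact ite_nonneg'
  calc _ ≤ ∑ s : Fin r → Bool, ∑ t : Fin r → Bool,
          (if ∀ i, s i = t i → v i = s i then (1 : ℝ) else 0) :=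
        Finset.sum_le_sum fun s _ => Finset.sum_le_sum fun t _ => hle s t
    _ = ∑ st : (Fin r → Bool) × (Fin r → Bool),
          (if ∀ i, st.1 i = st.2 i → v i = st.1 i then (1 : ℝ) else 0) :=
        (Fintype.sum_prod_type (f := fun st : (Fin r → Bool) × (Fin r → Bool) =>
          (if ∀ i, st.1 i = st.2 i → v i = st.1 i then (1 : ℝ) else 0))).symm
    _ = ((Finset.univ.filter
          (fun st : (Fin r → Bool) × (Fin r → Bool) =>
            ∀ i, st.1 i = st.2 i → v i = st.1 i)).card : ℝ) := by
        rw [Finset.sum_boole]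
    _ ≤ ((3 : ℝ) ^ r) := by
        have := count_le v
        calc ((Finset.univ.filter
            (fun st : (Fin r → Bool) × (Fin r → Bool) =>
              ∀ i, st.1 i = st.2 i → v i = st.1 i)).card : ℝ) ≤ ((3 ^ r : ℕ) : ℝ) := by
              exact_mod_cast this
          _ = (3 : ℝ) ^ r := by push_cast; ring

/-- Coverage centrality is submodular; hence for the hypercube `Q_r` with `n = 2^r`
vertices, `max_{|S| ≤ k} C(S) ≤ k·n^{log₂ 3}`, which is `o(n²)` for constant `k` since
`log₂ 3 < 2`. -/
theorem coverage_submodular_and_cube_bound :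
    (∀ (V : Type*) [Fintype V] [DecidableEq V] (G : SimpleGraph V)
        (S₁ S₂ : Finset V) (u : V), S₁ ⊆ S₂ → u ∉ S₂ →
      coverage G (insert u S₂) - coverage G S₂ ≤ coverage G (insert u S₁) - coverage G S₁) ∧
    (∀ (r k : ℕ) (S : Finset (Fin r → Bool)), S.card ≤ k →
      coverage (cube r) S ≤ (k : ℝ) * ((2 : ℝ) ^ r) ^ (Real.logb 2 3)) ∧
    Real.logb 2 3 < 2 := by
  refine ⟨?_, ?_, ?_⟩
  · -- submodularity
    intro V _ _ G S₁ S₂ u hsub _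
    set Q : Finset V → V → V → Prop := fun S s t =>
      ∃ p : G.Walk s t, IsShortestPath G p ∧ ∃ v ∈ internals p, v ∈ S with hQ
    have hmono : ∀ {S T : Finset V}, S ⊆ T → ∀ {s t}, Q S s t → Q T s t := by
      intro S T hST s t ⟨p, hp, v, hvp, hvS⟩
      exact ⟨p, hp, v, hvp, hST hvS⟩
    have key : ∀ s t : V,
        (if Q (insert u S₂) s t then (1:ℝ) else 0) - (if Q S₂ s t then (1:ℝ) else 0) ≤
        (if Q (insert u S₁) s t then (1:ℝ) else 0) - (if Q S₁ s t then (1:ℝ) else 0) := by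
      intro s t
      by_cases h2 : Q S₂ s t
      · have h2' : Q (insert u S₂) s t := hmono (Finset.subset_insert u S₂) h2
        rw [if_pos h2, if_pos h2']
        by_cases h1 : Q S₁ s t
        · rw [if_pos h1, if_pos (hmono (Finset.subset_insert u S₁) h1)]
        · rw [if_neg h1]
          have := ite_nonneg' (p := Q (insert u S₁) s t)
          linarith
      · rw [if_neg h2]
        have h1 : ¬ Q S₁ s t := fun h => h2 (hmono hsub h)
        rw [if_neg h1]
        by_cases h2u : Q (insert u S₂) s t
        · obtain ⟨p, hp, v, hvp, hvS⟩ := id h2u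
          have hvu : v = u := by
            rcases Finset.mem_insert.mp hvS with h | h
            · exact h
            · exact absurd ⟨p, hp, v, hvp, h⟩ h2
          have h1u : Q (insert u S₁) s t :=
            ⟨p, hp, v, hvp, hvu ▸ Finset.mem_insert_self u S₁⟩
          rw [if_pos h2u, if_pos h1u]
        · rw [if_neg h2u]
          have := ite_nonneg' (p := Q (insert u S₁) s t)
          linarith
    have expand : ∀ S : Finset V, coverage G S = ∑ s : V, ∑ t : V,
        (if Q S s t then (1:ℝ) else 0) := fun S => rfl
    rw [expand, expand, expand, expand, ← Finset.sum_sub_distrib, ← Finset.sum_sub_distrib]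
    refine Finset.sum_le_sum fun s _ => ?_
    rw [← Finset.sum_sub_distrib, ← Finset.sum_sub_distrib]
    exact Finset.sum_le_sum fun t _ => key s t
  · -- cube bound
    intro r k S hk
    have hrw : ((2 : ℝ) ^ r) ^ (Real.logb 2 3) = (3 : ℝ) ^ r := by
      rw [← Real.rpow_natCast 2 r, ← Real.rpow_mul (by norm_num), mul_comm,
        Real.rpow_mul (by norm_num), Real.rpow_logb (by norm_num) (by norm_num) (by norm_num),
        Real.rpow_natCast]
    rw [hrw]
    have step1 : coverage (cube r) S ≤
        ∑ v ∈ S, ∑ s : Fin r → Bool, ∑ t : Fin r → Bool,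
          (if ∃ p : (cube r).Walk s t, IsShortestPath (cube r) p ∧ v ∈ internals p
           then (1 : ℝ) else 0) := by
      rw [coverage]
      have hpt : ∀ s t : Fin r → Bool,
          (if ∃ p : (cube r).Walk s t, IsShortestPath (cube r) p ∧ ∃ v ∈ internals p, v ∈ S
           then (1 : ℝ) else 0) ≤
          ∑ v ∈ S, (if ∃ p : (cube r).Walk s t, IsShortestPath (cube r) p ∧ v ∈ internals p
           then (1 : ℝ) else 0) := by
        intro s t
        by_cases h : ∃ p : (cube r).Walk s t, IsShortestPath (cube r) p ∧ ∃ v ∈ internals p, v ∈ S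
        · obtain ⟨p, hp, v, hvp, hvS⟩ := id h
          rw [if_pos h]
          have hterm : (if ∃ p : (cube r).Walk s t,
              IsShortestPath (cube r) p ∧ v ∈ internals p then (1 : ℝ) else 0) = 1 :=
            if_pos ⟨p, hp, hvp⟩
          calc (1 : ℝ) = _ := hterm.symm
            _ ≤ _ := Finset.single_le_sum (f := fun v =>
                (if ∃ p : (cube r).Walk s t, IsShortestPath (cube r) p ∧ v ∈ internals p
                 then (1 : ℝ) else 0)) (fun _ _ => ite_nonneg') hvS
        · rw [if_neg h]
          exact Finset.sum_nonneg fun _ _ => ite_nonneg'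
      calc _ ≤ ∑ s : Fin r → Bool, ∑ t : Fin r → Bool, ∑ v ∈ S,
            (if ∃ p : (cube r).Walk s t, IsShortestPath (cube r) p ∧ v ∈ internals p
             then (1 : ℝ) else 0) :=
          Finset.sum_le_sum fun s _ => Finset.sum_le_sum fun t _ => hpt s t
        _ = ∑ s : Fin r → Bool, ∑ v ∈ S, ∑ t : Fin r → Bool,
            (if ∃ p : (cube r).Walk s t, IsShortestPath (cube r) p ∧ v ∈ internals p
             then (1 : ℝ) else 0) :=
          Finset.sum_congr rfl fun s _ => Finset.sum_comm
        _ = _ := Finset.sum_comm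
    calc coverage (cube r) S ≤ _ := step1
      _ ≤ ∑ _v ∈ S, (3 : ℝ) ^ r := Finset.sum_le_sum fun v _ => sum_ind_le v
      _ = (S.card : ℝ) * (3 : ℝ) ^ r := by rw [Finset.sum_const, nsmul_eq_mul]
      _ ≤ (k : ℝ) * (3 : ℝ) ^ r := by
          have : (S.card : ℝ) ≤ (k : ℝ) := by exact_mod_cast hk
          have h3 : (0:ℝ) ≤ (3:ℝ) ^ r := by positivity
          nlinarith
  · -- logb 2 3 < 2
    rw [Real.logb_lt_iff_lt_rpow (by norm_num) (by norm_num)]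
    have : (2 : ℝ) ^ (2 : ℝ) = 4 := by
      rw [show (2 : ℝ) = ((2 : ℕ) : ℝ) by norm_num, Real.rpow_natCast]
      norm_num
    rw [this]
    norm_num
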